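/- For positive definite matrices P, Q of size n, the quantity log det(P^{-1}Q) + tr(Q^{-1}P) - n is nonnegative, and it is zero if and only if P = Q. -/

import Mathlib

open Matrix

lemma myTrace_eq_sum_eigenvalues {m : Type*} [Fintype m] [DecidableEq m] {A : Matrix m m ℝ}
    (hA : A.IsHermitian) : A.trace = ∑ i, hA.eigenvalues i := by
  conv_lhs => rw [hA.spectral_theorem]
  rw [Unitary.conjStarAlgAut_apply, Matrix.trace_mul_cycle,
    Matrix.mem_unitaryGroup_iff'.mp (Matrix.IsHermitian.eigenvectorUnitary hA).2, one_mul,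
    Matrix.trace_diagonal]
  simp

/-- For positive definite matrices `P`, `Q` of size `n`, the quantity
`log det (P⁻¹ Q) + tr (Q⁻¹ P) - n` is nonnegative, and it vanishes iff `P = Q`. -/
theorem gaussian_kl_nonneg_and_eq_zero_iff {n : ℕ} (P Q : Matrix (Fin n) (Fin n) ℝ)
    (hP : P.PosDef) (hQ : Q.PosDef) :
    0 ≤ Real.log (P⁻¹ * Q).det + (Q⁻¹ * P).trace - n ∧
      (Real.log (P⁻¹ * Q).det + (Q⁻¹ * P).trace - n = 0 ↔ P = Q) := by
  classical
  have hQi : (Q⁻¹).PosDef := hQ.inv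
  set R : Matrix (Fin n) (Fin n) ℝ := (open scoped MatrixOrder in CFC.sqrt Q⁻¹) with hRdef
  have hRR : R * R = Q⁻¹ := by open scoped MatrixOrder in exact CFC.sqrt_mul_sqrt_self _ hQi.posSemidef.nonneg
  have hRH : R.IsHermitian := by open scoped MatrixOrder in exact (CFC.sqrt_nonneg _).posSemidef.1
  have hdetR : R.det ≠ 0 := by
    intro h
    have : (Q⁻¹).det = 0 := by rw [← hRR, Matrix.det_mul, h, mul_zero]
    exact (hQi.det_pos.ne' this)
  have hRunit : IsUnit R := (Matrix.isUnit_iff_isUnit_det R).mpr hdetR.isUnit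
  set S : Matrix (Fin n) (Fin n) ℝ := R * P * R with hSdef
  have hSH : S.IsHermitian := by
    show Sᴴ = S
    rw [hSdef, Matrix.conjTranspose_mul, Matrix.conjTranspose_mul, hRH.eq, hP.isHermitian.eq,
      mul_assoc]
  have hSpd : S.PosDef := by
    refine Matrix.PosDef.of_dotProduct_mulVec_pos hSH fun x hx => ?_
    have hkey : star x ⬝ᵥ S *ᵥ x = star (R *ᵥ x) ⬝ᵥ P *ᵥ (R *ᵥ x) := by
      rw [Matrix.star_mulVec, hRH.eq, ← Matrix.dotProduct_mulVec, Matrix.mulVec_mulVec,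
        Matrix.mulVec_mulVec, hSdef]
    have hRx : R *ᵥ x ≠ 0 :=
      (Matrix.mulVec_injective_iff_isUnit.mpr hRunit).ne_iff' (by simp) |>.mpr hx
    rw [hkey]
    exact hP.dotProduct_mulVec_pos hRx
  set lam := hSH.eigenvalues with hlam
  have hlampos : ∀ i, 0 < lam i := hSpd.eigenvalues_pos
  have hdetS : S.det = ∏ i, lam i := by
    have := hSH.det_eq_prod_eigenvalues
    simpa using this
  have htrS : S.trace = ∑ i, lam i := myTrace_eq_sum_eigenvalues hSH
  have hRR2 : R.det * R.det = Q.det⁻¹ := by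
    rw [← Matrix.det_mul, hRR, Matrix.det_nonsing_inv, Ring.inverse_eq_inv']
  have hdetSval : S.det = P.det * Q.det⁻¹ := by
    rw [hSdef, Matrix.det_mul, Matrix.det_mul]
    rw [show R.det * P.det * R.det = P.det * (R.det * R.det) by ring, hRR2]
  have htrval : S.trace = (Q⁻¹ * P).trace := by
    rw [hSdef, Matrix.trace_mul_comm, ← mul_assoc, hRR]
  -- log det (P⁻¹ * Q) = - log det S
  have hlogdet : Real.log (P⁻¹ * Q).det = - Real.log S.det := by
    rw [hdetSval, Matrix.det_mul, Matrix.det_nonsing_inv, Ring.inverse_eq_inv',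
      Real.log_mul (inv_ne_zero hP.det_pos.ne') hQ.det_pos.ne',
      Real.log_mul hP.det_pos.ne' (inv_ne_zero hQ.det_pos.ne'),
      Real.log_inv, Real.log_inv]
    ring
  have hlogS : Real.log S.det = ∑ i, Real.log (lam i) := by
    rw [hdetS, Real.log_prod]
    exact fun i _ => (hlampos i).ne'
  have hE : Real.log (P⁻¹ * Q).det + (Q⁻¹ * P).trace - n
      = ∑ i, (lam i - Real.log (lam i) - 1) := by
    rw [hlogdet, ← htrval, htrS, hlogS]
    simp [Finset.sum_sub_distrib]
    ring
  have hterm : ∀ i ∈ Finset.univ, 0 ≤ lam i - Real.log (lam i) - 1 := fun i _ => by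
    have := Real.log_le_sub_one_of_pos (hlampos i)
    linarith
  constructor
  · rw [hE]
    exact Finset.sum_nonneg hterm
  constructor
  · intro h0
    rw [hE] at h0
    have hall := (Finset.sum_eq_zero_iff_of_nonneg hterm).mp h0
    have hlam1 : ∀ i, lam i = 1 := by
      intro i
      by_contra hne
      have := Real.log_lt_sub_one_of_pos (hlampos i) hne
      have h := hall i (Finset.mem_univ i)
      linarith
    -- S = 1
    have hS1 : S = 1 := by
      conv_lhs => rw [hSH.spectral_theorem]
      have hd : (RCLike.ofReal ∘ hSH.eigenvalues : Fin n → ℝ) = fun _ => (1 : ℝ) :=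
        funext fun i => by simpa using hlam1 i
      rw [hd, Matrix.diagonal_one, Unitary.conjStarAlgAut_apply, mul_one]
      exact Matrix.mem_unitaryGroup_iff.mp (Matrix.IsHermitian.eigenvectorUnitary hSH).2
    -- P = Q
    have hRinv1 : R⁻¹ * R = 1 := Matrix.nonsing_inv_mul R hdetR.isUnit
    have hRinv2 : R * R⁻¹ = 1 := Matrix.mul_nonsing_inv R hdetR.isUnit
    have hP' : R⁻¹ * S * R⁻¹ = P := by
      rw [hSdef]
      simp only [← mul_assoc]
      rw [hRinv1, one_mul, mul_assoc, hRinv2, mul_one]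
    rw [hS1, mul_one, ← Matrix.mul_inv_rev, hRR, Matrix.nonsing_inv_nonsing_inv Q
      hQ.det_pos.ne'.isUnit] at hP'
    exact hP'.symm
  · intro hPQ
    subst hPQ
    rw [Matrix.nonsing_inv_mul P hP.det_pos.ne'.isUnit, Matrix.det_one, Real.log_one,
      Matrix.trace_one]
    simp
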